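/- Let 𝔤 be a Lie algebra over a field K and let n : 𝔤 → 𝔤 be a diagonalizable algebraic Nijenhuis operator: 𝔤 is the internal direct sum of subspaces V₁, …, V_s, n(v) = λᵢ·v for v ∈ Vᵢ, where λ₁, …, λ_s ∈ K are pairwise distinct, and T_n = 0. Then for all i, j ∈ {1,…,s} the subspace Vᵢ + Vⱼ is a Lie subalgebra of 𝔤 (in particular each eigenspace Vᵢ is a Lie subalgebra). -/

import Mathlib

/-!
For eigenvectors `x`, `y` of `n` with eigenvalues `a`, `b`, the Nijenhuis torsion `T_n(x, y)`
expands to `(n - a)(n - b)⁅x, y⁆`. Since `n` acts diagonally along the `V i`, the kernel of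
`(n - a)(n - b)` is spanned by the `V i` with `(λᵢ - a)(λᵢ - b) = 0`, which for distinct
eigenvalues are just the eigenspaces of `a` and `b`. Bilinearity of the bracket does the rest.
-/

open Module

theorem Submodule.mem_biSup_of_apply_eq_zero {R M ι : Type*} [Ring R] [IsDomain R]
    [AddCommGroup M] [Module R M] [IsTorsionFree R M] {V : ι → Submodule R M} (hV : iSupIndep V)
    {T : M →ₗ[R] M} {μ : ι → R} (hT : ∀ i, ∀ v ∈ V i, T v = μ i • v)
    {z : M} (hz : z ∈ ⨆ i, V i) (hTz : T z = 0) : z ∈ ⨆ (i) (_ : μ i = 0), V i := by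
  obtain ⟨f, hf, rfl⟩ := (Submodule.mem_iSup_iff_exists_finsupp V z).mp hz
  have hTf : ∑ i ∈ f.support, μ i • f i = 0 := by
    rw [← hTz, Finsupp.sum, map_sum]
    exact Finset.sum_congr rfl fun i _ => (hT i _ (hf i)).symm
  have hμf : ∀ i ∈ f.support, μ i • f i = 0 :=
    (iSupIndep_iff_finsetSum_eq_zero_imp_eq_zero V).mp hV f.support _
      (fun i _ => (V i).smul_mem _ (hf i)) hTf
  refine Submodule.sum_mem _ fun i hi => ?_
  rcases smul_eq_zero.mp (hμf i hi) with hμ | hfi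
  · exact Submodule.mem_iSup_of_mem i (Submodule.mem_iSup_of_mem hμ (hf i))
  · exact hfi ▸ Submodule.zero_mem _

def nijenhuisTorsion {R L : Type*} [CommRing R] [LieRing L] [LieAlgebra R L] (n : L →ₗ[R] L)
    (x y : L) : L :=
  ⁅n x, n y⁆ - n (⁅n x, y⁆ + ⁅x, n y⁆ - n ⁅x, y⁆)

theorem nijenhuisTorsion_of_apply_eq_smul {R L : Type*} [CommRing R] [LieRing L]
    [LieAlgebra R L]
    {n : L →ₗ[R] L} {a b : R} {x y : L} (hx : n x = a • x) (hy : n y = b • y) :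
    nijenhuisTorsion n x y = ((n - a • 1) * (n - b • 1)) ⁅x, y⁆ := by
  simp only [nijenhuisTorsion, hx, hy, lie_smul, smul_lie, End.mul_apply,
    LinearMap.sub_apply, LinearMap.smul_apply, End.one_apply, map_add, map_sub, map_smul]
  module

theorem lie_mem_sup_of_nijenhuisTorsion_eq_zero {K L ι : Type*} [Field K] [LieRing L]
    [LieAlgebra K L] {V : ι → Submodule K L} (hV : iSupIndep V) (hVtop : ⨆ i, V i = ⊤)
    {lam : ι → K} (hlam : Function.Injective lam) {n : L →ₗ[K] L}
    (hn : ∀ i, ∀ v ∈ V i, n v = lam i • v) (hN : ∀ x y, nijenhuisTorsion n x y = 0)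
    {k l : ι} {x y : L} (hx : x ∈ V k) (hy : y ∈ V l) : ⁅x, y⁆ ∈ V k ⊔ V l := by
  have hT : ∀ i, ∀ v ∈ V i,
      ((n - lam k • 1) * (n - lam l • 1)) v = ((lam i - lam k) * (lam i - lam l)) • v := by
    intro i v hv
    simp only [End.mul_apply, LinearMap.sub_apply, LinearMap.smul_apply,
      End.one_apply, map_sub, map_smul, hn i v hv]
    module
  have hker : ((n - lam k • 1) * (n - lam l • 1)) ⁅x, y⁆ = 0 := by
    rw [← nijenhuisTorsion_of_apply_eq_smul (hn k x hx) (hn l y hy), hN]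
  have hroots : ⨆ (i) (_ : (lam i - lam k) * (lam i - lam l) = 0), V i ≤ V k ⊔ V l := by
    refine iSup₂_le fun i hi => ?_
    rcases mul_eq_zero.mp hi with hik | hil
    · exact hlam (sub_eq_zero.mp hik) ▸ le_sup_left
    · exact hlam (sub_eq_zero.mp hil) ▸ le_sup_right
  exact hroots (Submodule.mem_biSup_of_apply_eq_zero hV hT (hVtop ▸ Submodule.mem_top) hker)

/-- Let `𝔤` be a Lie algebra over a field `K` and `n : 𝔤 → 𝔤` a
diagonalizable algebraic Nijenhuis operator: `𝔤` is the internal direct sum of subspaces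
`V 0, …, V (s-1)`, `n` acts on `V i` as `λ i • ·` with pairwise distinct eigenvalues `λ i`,
and the Nijenhuis torsion of `n` vanishes.  Then each `V i + V j` (in particular each
eigenspace `V i`) is a Lie subalgebra of `𝔤`. -/
theorem eigenspace_sum_isLieSubalgebra_of_nijenhuis {K : Type*} [Field K] {L : Type*}
    [LieRing L] [LieAlgebra K L] {s : ℕ} (V : Fin s → Submodule K L)
    (hV : DirectSum.IsInternal V) (lam : Fin s → K) (hlam : Function.Injective lam)
    (n : L →ₗ[K] L) (hn : ∀ i, ∀ v ∈ V i, n v = lam i • v)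
    (hN : ∀ x y : L, ⁅n x, n y⁆ - n (⁅n x, y⁆ + ⁅x, n y⁆ - n ⁅x, y⁆) = 0) :
    ∀ i j, ∀ x ∈ V i ⊔ V j, ∀ y ∈ V i ⊔ V j, ⁅x, y⁆ ∈ V i ⊔ V j := by
  intro i j x hx y hy
  have hbracket (k l : Fin s) (hkl : V k ⊔ V l ≤ V i ⊔ V j) {u v : L} (hu : u ∈ V k)
      (hv : v ∈ V l) : ⁅u, v⁆ ∈ V i ⊔ V j :=
    hkl (lie_mem_sup_of_nijenhuisTorsion_eq_zero hV.submodule_iSupIndep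
      hV.submodule_iSup_eq_top hlam hn hN hu hv)
  obtain ⟨a, ha, b, hb, rfl⟩ := Submodule.mem_sup.mp hx
  obtain ⟨c, hc, d, hd, rfl⟩ := Submodule.mem_sup.mp hy
  simp only [add_lie, lie_add]
  exact add_mem (add_mem (hbracket i i (by simp) ha hc) (hbracket j i (sup_comm _ _).le hb hc))
    (add_mem (hbracket i j le_rfl ha hd) (hbracket j j (by simp) hb hd))
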